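/- Let a : ℝⁿ × ℝⁿ → ℂ satisfy |∂^α_x ∂^β_ξ a(x,ξ)| ≤ C_{α,β} ⟨x⟩^{m−|α|} ⟨ξ⟩^{μ−|β|} with m, μ ≤ m_p ≤ 0. Let k ≥ 1 and a_k(x,ξ) = a(2^k x, 2^{−k}ξ). Then on the region 1/4 ≤ |x| ≤ 4, |∂^α_x ∂^β_ξ a_k(x,ξ)| ≤ C'_{α,β} ⟨ξ⟩^{m_p−|β|}, with C'_{α,β} independent of k. -/

import Mathlib

/-!
The rescalings `x ↦ 2ᵏx`, `ξ ↦ 2⁻ᵏξ` are linear isomorphisms, so they multiply the `(i, j)`-th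
mixed derivative exactly by `2^{k(i-j)}`, with no smoothness assumption on `a`.
For `|x| ≥ 1/4` we have `⟨2ᵏx⟩ ≥ 2ᵏ/4`, which absorbs `2^{ki}` and leaves
`4^{i-m} 2^{km} ≤ 4^{i-m} 2^{k m_p}`; and since `⟨ξ⟩ ≤ 2ᵏ⟨2⁻ᵏξ⟩` and `μ ≤ m_p ≤ 0`, the
remaining `2^{k(m_p-j)} ⟨2⁻ᵏξ⟩^{μ-j}` is at most `⟨ξ⟩^{m_p-j}`.
-/

open Set

section Rescaling

variable {𝕜 E F G : Type*} [NontriviallyNormedField 𝕜]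
  [NormedAddCommGroup E] [NormedSpace 𝕜 E] [NormedAddCommGroup F] [NormedSpace 𝕜 F]
  [NormedAddCommGroup G] [NormedSpace 𝕜 G]

theorem iteratedFDeriv_comp_const_smul_of_ne_zero {f : E → F} {a : 𝕜} (ha : a ≠ 0) (i : ℕ) :
    iteratedFDeriv 𝕜 i (fun z ↦ f (a • z)) = fun x ↦ a ^ i • iteratedFDeriv 𝕜 i f (a • x) := by
  let e : E ≃L[𝕜] E := ContinuousLinearEquiv.smulLeft (Units.mk0 a ha)
  ext x v
  have := e.iteratedFDerivWithin_comp_right f uniqueDiffOn_univ (mem_univ (e x)) i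
  simp only [preimage_univ, iteratedFDerivWithin_univ] at this
  change iteratedFDeriv 𝕜 i (f ∘ e) x v = _
  rw [this]
  simp [e, ContinuousMultilinearMap.map_smul_univ]

theorem iteratedFDeriv_const_smul_of_ne_zero {f : E → F} {a : 𝕜} (ha : a ≠ 0) (i : ℕ) :
    iteratedFDeriv 𝕜 i (fun z ↦ a • f z) = fun x ↦ a • iteratedFDeriv 𝕜 i f x := by
  let e : F ≃L[𝕜] F := ContinuousLinearEquiv.smulLeft (Units.mk0 a ha)
  ext x v
  have := e.iteratedFDeriv_comp_left (f := f) (x := x) (i := i)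
  change iteratedFDeriv 𝕜 i (e ∘ f) x v = _
  rw [this]
  simp [e]

theorem iteratedFDeriv_iteratedFDeriv_comp_smul_smul (b : E → F → G) {c d : 𝕜}
    (hc : c ≠ 0) (hd : d ≠ 0) (i j : ℕ) (x : E) (ξ : F) :
    iteratedFDeriv 𝕜 i (fun x' ↦ iteratedFDeriv 𝕜 j (fun ξ' ↦ b (c • x') (d • ξ')) ξ) x =
      (c ^ i * d ^ j) •
        iteratedFDeriv 𝕜 i (fun x' ↦ iteratedFDeriv 𝕜 j (b x') (d • ξ)) (c • x) := by
  simp only [iteratedFDeriv_comp_const_smul_of_ne_zero hd,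
    iteratedFDeriv_comp_const_smul_of_ne_zero
      (f := fun x' ↦ d ^ j • iteratedFDeriv 𝕜 j (b x') (d • ξ)) hc,
    iteratedFDeriv_const_smul_of_ne_zero (pow_ne_zero j hd), smul_smul]

end Rescaling

section JapaneseBracket

variable {E : Type*} [NormedAddCommGroup E]

theorem one_le_sqrt_one_add_norm_sq (x : E) : 1 ≤ √(1 + ‖x‖ ^ 2) :=
  Real.one_le_sqrt.mpr (le_add_of_nonneg_right (by positivity))

theorem norm_le_sqrt_one_add_norm_sq (x : E) : ‖x‖ ≤ √(1 + ‖x‖ ^ 2) :=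
  Real.le_sqrt_of_sq_le (by linarith)

variable [NormedSpace ℝ E]

theorem sqrt_one_add_norm_sq_le_mul_inv_smul {c : ℝ} (hc : 1 ≤ c) (ξ : E) :
    √(1 + ‖ξ‖ ^ 2) ≤ c * √(1 + ‖c⁻¹ • ξ‖ ^ 2) := by
  have hc0 : 0 < c := by linarith
  have hsq : c * √(1 + ‖c⁻¹ • ξ‖ ^ 2) = √(c ^ 2 + ‖ξ‖ ^ 2) := by
    rw [← Real.sqrt_sq hc0.le, ← Real.sqrt_mul (by positivity), Real.sqrt_sq hc0.le,
      norm_smul, Real.norm_eq_abs, abs_inv, abs_of_pos hc0]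
    congr 1
    field_simp
  rw [hsq]
  exact Real.sqrt_le_sqrt (by nlinarith)

theorem sqrt_one_add_norm_sq_smul_rpow_le {c r p : ℝ} (hc : 0 < c) (hr : 0 < r) {x : E}
    (hx : r ≤ ‖x‖) (hp : p ≤ 0) : √(1 + ‖c • x‖ ^ 2) ^ p ≤ (c * r) ^ p := by
  refine Real.rpow_le_rpow_of_nonpos (by positivity) ?_ hp
  calc c * r ≤ ‖c • x‖ := by
        rw [norm_smul, Real.norm_eq_abs, abs_of_pos hc]
        gcongr
    _ ≤ _ := norm_le_sqrt_one_add_norm_sq _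

theorem rpow_mul_sqrt_one_add_norm_sq_inv_smul_rpow_le {c p q : ℝ} (hc : 1 ≤ c) (hqp : q ≤ p)
    (hp : p ≤ 0) (ξ : E) : c ^ p * √(1 + ‖c⁻¹ • ξ‖ ^ 2) ^ q ≤ √(1 + ‖ξ‖ ^ 2) ^ p := by
  have hu := one_le_sqrt_one_add_norm_sq (c⁻¹ • ξ)
  calc c ^ p * √(1 + ‖c⁻¹ • ξ‖ ^ 2) ^ q ≤ c ^ p * √(1 + ‖c⁻¹ • ξ‖ ^ 2) ^ p := by
        gcongr
    _ = (c * √(1 + ‖c⁻¹ • ξ‖ ^ 2)) ^ p := by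
        rw [Real.mul_rpow (by linarith) (by linarith)]
    _ ≤ √(1 + ‖ξ‖ ^ 2) ^ p :=
        Real.rpow_le_rpow_of_nonpos (by positivity) (sqrt_one_add_norm_sq_le_mul_inv_smul hc ξ) hp

theorem rescaled_weight_le {m μ mp : ℝ} (hm : m ≤ mp) (hμ : μ ≤ mp) (hmp : mp ≤ 0) (i j : ℕ)
    {c : ℝ} (hc : 1 ≤ c) {x : E} (hx : 1 / 4 ≤ ‖x‖) (ξ : E) :
    c ^ i * c⁻¹ ^ j * (√(1 + ‖c • x‖ ^ 2) ^ (m - i) * √(1 + ‖c⁻¹ • ξ‖ ^ 2) ^ (μ - j)) ≤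
      4 ^ ((i : ℝ) - m) * √(1 + ‖ξ‖ ^ 2) ^ (mp - j) := by
  have hc0 : 0 < c := by linarith
  have hpowers : c ^ i * c⁻¹ ^ j * (c / 4) ^ (m - i) =
      4 ^ ((i : ℝ) - m) * c ^ (m - mp) * c ^ (mp - j) := by
    have h4 : (0 : ℝ) < 4 := by norm_num
    rw [Real.div_rpow hc0.le h4.le, Real.rpow_sub hc0, Real.rpow_sub hc0, Real.rpow_sub hc0,
      Real.rpow_sub h4, Real.rpow_sub h4]
    simp only [Real.rpow_natCast, inv_pow]
    field_simp
  calc _ ≤ c ^ i * c⁻¹ ^ j * ((c / 4) ^ (m - i) * √(1 + ‖c⁻¹ • ξ‖ ^ 2) ^ (μ - j)) := by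
        have hX := sqrt_one_add_norm_sq_smul_rpow_le hc0 (by norm_num) hx (p := m - i) (by linarith)
        rw [mul_one_div] at hX
        exact mul_le_mul_of_nonneg_left (mul_le_mul_of_nonneg_right hX (by positivity))
          (by positivity)
    _ = 4 ^ ((i : ℝ) - m) * c ^ (m - mp) *
          (c ^ (mp - j) * √(1 + ‖c⁻¹ • ξ‖ ^ 2) ^ (μ - j)) := by
        rw [← mul_assoc, hpowers]; ring
    _ ≤ 4 ^ ((i : ℝ) - m) * 1 * √(1 + ‖ξ‖ ^ 2) ^ (mp - j) := by
        gcongr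
        · exact Real.rpow_le_one_of_one_le_of_nonpos hc (by linarith)
        · exact rpow_mul_sqrt_one_add_norm_sq_inv_smul_rpow_le hc (by linarith) (by linarith) ξ
    _ = _ := by ring

end JapaneseBracket

/-- rescaled amplitude estimate. If
`|∂^α_x ∂^β_ξ a(x,ξ)| ≤ C_{α,β}⟨x⟩^{m−|α|}⟨ξ⟩^{μ−|β|}` with `m, μ ≤ m_p ≤ 0`, then for
`a_k(x,ξ) = a(2^k x, 2^{−k}ξ)` and `1/4 ≤ |x| ≤ 4`,
`|∂^α_x ∂^β_ξ a_k(x,ξ)| ≤ C'_{α,β}⟨ξ⟩^{m_p−|β|}` with `C'_{α,β}` independent of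
`k ≥ 1`. -/
theorem stmt18 (n : ℕ)
    (a : EuclideanSpace ℝ (Fin n) → EuclideanSpace ℝ (Fin n) → ℂ)
    (m μ mp : ℝ) (hm : m ≤ mp) (hμ : μ ≤ mp) (hmp : mp ≤ 0)
    (C : ℕ → ℕ → ℝ)
    (ha : ∀ (i j : ℕ) (x ξ : EuclideanSpace ℝ (Fin n)),
      ‖iteratedFDeriv ℝ i (fun x' => iteratedFDeriv ℝ j (fun ξ' => a x' ξ') ξ) x‖ ≤
        C i j * Real.sqrt (1 + ‖x‖ ^ 2) ^ (m - (i : ℝ)) *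
          Real.sqrt (1 + ‖ξ‖ ^ 2) ^ (μ - (j : ℝ))) :
    ∃ C' : ℕ → ℕ → ℝ, (∀ i j, 0 < C' i j) ∧
      ∀ (k : ℕ), 1 ≤ k →
        ∀ (i j : ℕ) (x ξ : EuclideanSpace ℝ (Fin n)),
          (1 : ℝ) / 4 ≤ ‖x‖ → ‖x‖ ≤ 4 →
          ‖iteratedFDeriv ℝ i
              (fun x' => iteratedFDeriv ℝ j
                (fun ξ' => a ((2 : ℝ) ^ (k : ℝ) • x') ((2 : ℝ) ^ (-(k : ℝ)) • ξ')) ξ) x‖ ≤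
            C' i j * Real.sqrt (1 + ‖ξ‖ ^ 2) ^ (mp - (j : ℝ)) := by
  refine ⟨fun i j ↦ max (C i j) 1 * 4 ^ ((i : ℝ) - m), fun i j ↦ by positivity, ?_⟩
  intro k _ i j x ξ hx _
  set c : ℝ := 2 ^ (k : ℝ)
  have hc : 1 ≤ c := Real.one_le_rpow one_le_two k.cast_nonneg
  have hc0 : 0 < c := by linarith
  rw [Real.rpow_neg zero_le_two, iteratedFDeriv_iteratedFDeriv_comp_smul_smul a hc0.ne'
    (inv_ne_zero hc0.ne'), norm_smul, norm_mul, norm_pow, norm_pow, Real.norm_of_nonneg hc0.le,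
    Real.norm_of_nonneg (inv_nonneg.mpr hc0.le)]
  have hbound := ha i j (c • x) (c⁻¹ • ξ)
  calc c ^ i * c⁻¹ ^ j * ‖iteratedFDeriv ℝ i
          (fun x' ↦ iteratedFDeriv ℝ j (a x') (c⁻¹ • ξ)) (c • x)‖
      ≤ C i j * (c ^ i * c⁻¹ ^ j * (√(1 + ‖c • x‖ ^ 2) ^ (m - i) *
          √(1 + ‖c⁻¹ • ξ‖ ^ 2) ^ (μ - j))) := by
        refine (mul_le_mul_of_nonneg_left hbound (by positivity)).trans_eq ?_
        ring
    _ ≤ max (C i j) 1 * (4 ^ ((i : ℝ) - m) * √(1 + ‖ξ‖ ^ 2) ^ (mp - j)) :=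
        mul_le_mul (le_max_left _ _) (rescaled_weight_le hm hμ hmp i j hc hx ξ)
          (by positivity) (by positivity)
    _ = _ := by ring
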